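/- Let C(c,t) be the cell condition α < ord(t−c) < β ∧ ac_m(t−c) = ac_m(λ) over ℚ_p with λ ≠ 0, and let ρ_max be the largest γ with α < γ < β and γ ≡ ord λ mod n realized by the cell (assume the cell fiber is nonempty). If c' ∈ ℚ_p satisfies ord(c − c') ≥ ρ_max + m, then for all t, C(c,t) holds if and only if C(c',t) holds. -/

import Mathlib

open scoped Classical

namespace PaperCD

variable (p : ℕ) [hp : Fact p.Prime]

/-- The unit part of a nonzero `p`-adic number: `x * p^(-ord x)`, an element of `ℤ_[p]`
of norm one; `0` is sent to `0`. -/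
noncomputable def unitPart (x : ℚ_[p]) : ℤ_[p] :=
  if h : x = 0 then 0 else
    ⟨x * (p : ℚ_[p]) ^ (-x.valuation), by
      have hp0 : (p : ℝ) ≠ 0 := by exact_mod_cast hp.out.ne_zero
      have hx : ‖x * (p : ℚ_[p]) ^ (-x.valuation)‖ = 1 := by
        rw [norm_mul, Padic.norm_p_zpow, Padic.norm_eq_zpow_neg_valuation h, neg_neg,
          ← zpow_add₀ hp0]
        simp
      exact le_of_eq hx⟩

/-- The angular component map of level `m`: `ac_m(x) = x·p^(-ord x) mod p^m`,
with `ac m 0 = 0`. -/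
noncomputable def ac (m : ℕ) (x : ℚ_[p]) : ZMod (p ^ m) :=
  PadicInt.toZModPow m (unitPart p x)

/-- The closed ball of (valuative) radius `γ` around `a` in `ℚ_[p]`:
`{t | ord (t - a) ≥ γ}`. -/
def pball (γ : ℤ) (a : ℚ_[p]) : Set ℚ_[p] := {t | ‖t - a‖ ≤ (p : ℝ) ^ (-γ)}

end PaperCD

open PaperCD

/-- The `1`-cell condition `α < ord (t - c) < β ∧ t - c ∈ lam · Q_{n,m}`. -/
def cellCond (p : ℕ) [Fact p.Prime] (n m : ℕ) (α β : ℤ) (lam c t : ℚ_[p]) : Prop :=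
  t ≠ c ∧ α < (t - c).valuation ∧ (t - c).valuation < β ∧
    (n : ℤ) ∣ ((t - c).valuation - lam.valuation) ∧ ac p m (t - c) = ac p m lam

/-!
If `ord (c - c') ≥ ord (t - c) + m` with `m ≥ 1`, then `t - c' = (t - c) + (c - c')` perturbs
`t - c` by something `p ^ m` times smaller, so it has the same valuation and, after dividing by
`p ^ ord (t - c)`, the same residue mod `p ^ m`: the same angular component of level `m`. Every `t`
in either fiber has `ord (t - c) = ord (t - c') ≤ ρmax` (for the `c'`-fiber apply maximality to the
translate `t - c' + c`), so the perturbation applies in both directions.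
-/

namespace Padic

variable {p : ℕ} [Fact p.Prime]

private lemma one_lt_p_real : 1 < (p : ℝ) := mod_cast (Fact.out : p.Prime).one_lt

lemma valuation_eq_of_norm_eq {x y : ℚ_[p]} (hx : x ≠ 0) (hy : y ≠ 0) (h : ‖x‖ = ‖y‖) :
    x.valuation = y.valuation := by
  rw [norm_eq_zpow_neg_valuation hx, norm_eq_zpow_neg_valuation hy] at h
  exact neg_injective (zpow_right_injective₀ (zero_lt_one.trans one_lt_p_real)
    one_lt_p_real.ne' h)

lemma valuation_neg (x : ℚ_[p]) : (-x).valuation = x.valuation := by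
  rcases eq_or_ne x 0 with rfl | hx
  · rw [neg_zero]
  · exact valuation_eq_of_norm_eq (neg_ne_zero.2 hx) hx (norm_neg x)

lemma norm_le_zpow_iff_le_valuation {x : ℚ_[p]} (hx : x ≠ 0) (γ : ℤ) :
    ‖x‖ ≤ (p : ℝ) ^ (-γ) ↔ γ ≤ x.valuation := by
  rw [norm_eq_zpow_neg_valuation hx, zpow_le_zpow_iff_right₀ one_lt_p_real, neg_le_neg_iff]

lemma norm_add_eq_of_valuation_lt {x y : ℚ_[p]} (hy : y ≠ 0) (h : y.valuation < x.valuation) :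
    ‖y + x‖ = ‖y‖ := by
  rcases eq_or_ne x 0 with rfl | hx
  · rw [add_zero]
  have hlt : ‖x‖ < ‖y‖ := by
    rw [norm_eq_zpow_neg_valuation hx, norm_eq_zpow_neg_valuation hy]
    exact zpow_lt_zpow_right₀ one_lt_p_real (neg_lt_neg h)
  rw [add_eq_max_of_ne hlt.ne', max_eq_left hlt.le]

lemma add_ne_zero_of_valuation_lt {x y : ℚ_[p]} (hy : y ≠ 0) (h : y.valuation < x.valuation) :
    y + x ≠ 0 := by
  rw [← norm_ne_zero_iff, norm_add_eq_of_valuation_lt hy h]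
  exact norm_ne_zero_iff.2 hy

lemma valuation_add_eq_of_valuation_lt {x y : ℚ_[p]} (hy : y ≠ 0)
    (h : y.valuation < x.valuation) : (y + x).valuation = y.valuation :=
  valuation_eq_of_norm_eq (add_ne_zero_of_valuation_lt hy h) hy (norm_add_eq_of_valuation_lt hy h)

end Padic

namespace PaperCD

open Padic

variable {p : ℕ} [Fact p.Prime]

lemma coe_unitPart {x : ℚ_[p]} (hx : x ≠ 0) :
    (unitPart p x : ℚ_[p]) = x * (p : ℚ_[p]) ^ (-x.valuation) := by
  simp [unitPart, hx]

lemma ac_eq_of_norm_sub_le {m : ℕ} {x y : ℚ_[p]} (hx : x ≠ 0) (hy : y ≠ 0)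
    (hv : x.valuation = y.valuation) (h : ‖x - y‖ ≤ (p : ℝ) ^ (-(y.valuation + m))) :
    ac p m x = ac p m y := by
  rw [ac, ac, ← sub_eq_zero, ← map_sub, ← RingHom.mem_ker, PadicInt.ker_toZModPow,
    ← PadicInt.norm_le_pow_iff_mem_span_pow, ← PadicInt.padic_norm_e_of_padicInt,
    PadicInt.coe_sub, coe_unitPart hx, coe_unitPart hy, hv, ← sub_mul, norm_mul, norm_p_zpow,
    neg_neg]
  have hp0 : (0 : ℝ) < p := by exact_mod_cast (Fact.out : p.Prime).pos
  calc ‖x - y‖ * (p : ℝ) ^ y.valuation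
      ≤ (p : ℝ) ^ (-(y.valuation + m)) * (p : ℝ) ^ y.valuation := by gcongr
    _ = (p : ℝ) ^ (-(m : ℤ)) := by rw [← zpow_add₀ hp0.ne']; ring_nf

lemma ac_add_eq_of_valuation_le {m : ℕ} (hm : 1 ≤ m) {x y : ℚ_[p]} (hy : y ≠ 0)
    (h : y.valuation + m ≤ x.valuation) : ac p m (y + x) = ac p m y := by
  rcases eq_or_ne x 0 with rfl | hx
  · rw [add_zero]
  have hlt : y.valuation < x.valuation := by omega
  refine ac_eq_of_norm_sub_le (add_ne_zero_of_valuation_lt hy hlt) hy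
    (valuation_add_eq_of_valuation_lt hy hlt) ?_
  rw [add_sub_cancel_left]
  exact (norm_le_zpow_iff_le_valuation hx _).2 h

end PaperCD

section Cell

open Padic PaperCD

variable {p : ℕ} [Fact p.Prime] {n m : ℕ} {α β : ℤ} {lam c c' t t' : ℚ_[p]}

lemma cellCond_congr_sub (h : t - c = t' - c') :
    cellCond p n m α β lam c t ↔ cellCond p n m α β lam c' t' := by
  rw [cellCond, cellCond, ← sub_ne_zero, ← sub_ne_zero (a := t'), h]

lemma cellCond.recenter (hm : 1 ≤ m) (ht : cellCond p n m α β lam c t)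
    (h : (t - c).valuation + m ≤ (c - c').valuation) : cellCond p n m α β lam c' t := by
  obtain ⟨htc, hα, hβ, hdvd, hac⟩ := ht
  have hy : t - c ≠ 0 := sub_ne_zero.2 htc
  have hlt : (t - c).valuation < (c - c').valuation := by omega
  have e : t - c + (c - c') = t - c' := by ring
  have hv := valuation_add_eq_of_valuation_lt hy hlt
  have hne := add_ne_zero_of_valuation_lt hy hlt
  rw [e] at hv hne
  refine ⟨sub_ne_zero.1 hne, hv ▸ hα, hv ▸ hβ, hv ▸ hdvd, ?_⟩
  rw [← e, ac_add_eq_of_valuation_le hm hy h, hac]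

end Cell

theorem cell_center_can_move_in_ball_general (p n m : ℕ) [Fact p.Prime] (hm : 1 ≤ m)
    (α β ρmax : ℤ) (lam c c' : ℚ_[p])
    (hmax : ∀ t, cellCond p n m α β lam c t → (t - c).valuation ≤ ρmax)
    (hc' : c = c' ∨ ρmax + m ≤ (c - c').valuation) :
    ∀ t, cellCond p n m α β lam c t ↔ cellCond p n m α β lam c' t := by
  rcases hc' with rfl | hball
  · exact fun t => Iff.rfl
  have hball' : ρmax + m ≤ (c' - c).valuation := by rwa [← neg_sub, Padic.valuation_neg]
  intro t
  refine ⟨fun ht => ht.recenter hm (by linarith [hmax t ht]), fun ht => ?_⟩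
  have hshift : cellCond p n m α β lam c (t - c' + c) := (cellCond_congr_sub (by ring)).2 ht
  have hle := hmax _ hshift
  rw [add_sub_cancel_right] at hle
  exact ht.recenter hm (by omega)

theorem cell_center_can_move_in_ball (p n m : ℕ) [Fact p.Prime] (hn : 1 ≤ n) (hm : 1 ≤ m)
    (α β ρmax : ℤ) (lam c c' : ℚ_[p]) (hlam : lam ≠ 0)
    (hreal : ∃ t, cellCond p n m α β lam c t ∧ (t - c).valuation = ρmax)
    (hmax : ∀ t, cellCond p n m α β lam c t → (t - c).valuation ≤ ρmax)
    (hc' : c = c' ∨ ρmax + m ≤ (c - c').valuation) :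
    ∀ t, cellCond p n m α β lam c t ↔ cellCond p n m α β lam c' t :=
  cell_center_can_move_in_ball_general p n m hm α β ρmax lam c c' hmax hc'
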